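/- arXiv:1805.00429 — 4 statements merged into one kernel-verified Lean document; each statement's English description precedes it below -/
import Mathlib

section
/- The group presented with four generators x, y, z, h and relators x h x⁻¹ h⁻¹, y h y⁻¹ h⁻¹, z h z⁻¹ h⁻¹, x² h, y² h, z⁻² h, and x y z (i.e., the fundamental-group presentation of a Seifert fibered space over S² with three exceptional fibers of indices 2, 2, −2) is isomorphic to the quaternion group of order 8. -/
/-- The relator set for the fundamental-group presentation of the quaternion space:
generators `x = of 0`, `y = of 1`, `z = of 2`, `h = of 3`, relators
`xhx⁻¹h⁻¹, yhy⁻¹h⁻¹, zhz⁻¹h⁻¹, x²h, y²h, z⁻²h, xyz`. -/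
def quaternionSpaceRels : Set (FreeGroup (Fin 4)) :=
  { FreeGroup.of 0 * FreeGroup.of 3 * (FreeGroup.of 0)⁻¹ * (FreeGroup.of 3)⁻¹,
    FreeGroup.of 1 * FreeGroup.of 3 * (FreeGroup.of 1)⁻¹ * (FreeGroup.of 3)⁻¹,
    FreeGroup.of 2 * FreeGroup.of 3 * (FreeGroup.of 2)⁻¹ * (FreeGroup.of 3)⁻¹,
    FreeGroup.of 0 ^ 2 * FreeGroup.of 3,
    FreeGroup.of 1 ^ 2 * FreeGroup.of 3,
    (FreeGroup.of 2)⁻¹ ^ 2 * FreeGroup.of 3,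
    FreeGroup.of 0 * FreeGroup.of 1 * FreeGroup.of 2 }

/-! In this group `h = x⁻²` and `z = (xy)⁻¹`, and the relators force `yxy⁻¹ = x⁻¹` and
`y² = x²`; hence `x⁴ = 1` and every element is a word `xᵏyᵉ` with `k < 4`, `e < 2`. The assignment
`x ↦ i`, `y ↦ j` into `Q₈` respects the relators and sends these eight words to the eight distinct
elements of `Q₈`, so the induced homomorphism is bijective. -/

section QuaternionNormalForm

def quaternionNormalForm {M : Type*} [Monoid M] (x y : M) (p : Fin 4 × Fin 2) : M :=
  x ^ (p.1 : ℕ) * y ^ (p.2 : ℕ)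

theorem MonoidHom.comp_quaternionNormalForm {M N : Type*} [Monoid M] [Monoid N] (f : M →* N)
    (x y : M) : f ∘ quaternionNormalForm x y = quaternionNormalForm (f x) (f y) := by
  funext p
  simp only [Function.comp_apply, quaternionNormalForm, map_mul, map_pow]

variable {G : Type*} [Group G]

theorem pow_four_eq_one_of_conj_eq_inv {x y : G} (hyx : y * x * y⁻¹ = x⁻¹) (hy : y ^ 2 = x ^ 2) :
    x ^ 4 = 1 := by
  -- conjugation by `y` inverts `x²` but fixes `y² = x²`
  have hx : x⁻¹ ^ 2 = x ^ 2 := by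
    calc x⁻¹ ^ 2 = y * x ^ 2 * y⁻¹ := by rw [← hyx, conj_pow]
      _ = x ^ 2 := by rw [← hy]; group
  calc x ^ 4 = (x⁻¹ ^ 2)⁻¹ * x ^ 2 := by group
    _ = 1 := by rw [hx, inv_mul_cancel]

theorem exists_pow_mul_pow_of_mem_closure {x y : G} (hyx : y * x * y⁻¹ = x⁻¹)
    (hy : y ^ 2 = x ^ 2) {g : G} (hg : g ∈ Subgroup.closure {x, y}) :
    ∃ n m : ℕ, g = x ^ n * y ^ m := by
  have hx4 := pow_four_eq_one_of_conj_eq_inv hyx hy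
  have hx_inv : x⁻¹ = x ^ 3 := by rw [inv_eq_iff_mul_eq_one, ← pow_succ', hx4]
  have hy4 : y ^ 4 = 1 := by rw [(by norm_num : 4 = 2 * 2), pow_mul, hy, ← pow_mul, hx4]
  have hy_inv : y⁻¹ = x ^ 2 * y := by
    rw [inv_eq_iff_mul_eq_one, ← hy, ← hy4]
    group
  have mul_x_pow : ∀ a n m : ℕ, x ^ a * (x ^ n * y ^ m) = x ^ (a + n) * y ^ m := by
    intro a n m; rw [pow_add, mul_assoc]
  have mul_y : ∀ n m : ℕ, y * (x ^ n * y ^ m) = x ^ (3 * n) * y ^ (m + 1) := by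
    intro n m
    have : y * x ^ n * y⁻¹ = x ^ (3 * n) := by rw [← conj_pow, hyx, hx_inv, pow_mul]
    rw [pow_succ', ← this]; group
  induction hg using Subgroup.closure_induction_left with
  | one => exact ⟨0, 0, by simp⟩
  | mul_left a ha g _ ih =>
    obtain ⟨n, m, rfl⟩ := ih
    rcases ha with rfl | rfl
    · exact ⟨1 + n, m, by rw [← mul_x_pow, pow_one]⟩
    · exact ⟨_, _, mul_y n m⟩
  | inv_mul_cancel a ha g _ ih =>
    obtain ⟨n, m, rfl⟩ := ih
    rcases ha with rfl | rfl
    · exact ⟨3 + n, m, by rw [hx_inv, mul_x_pow]⟩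
    · exact ⟨2 + 3 * n, m + 1, by rw [hy_inv, mul_assoc, mul_y, mul_x_pow]⟩

theorem quaternionNormalForm_surjective {x y : G} (hyx : y * x * y⁻¹ = x⁻¹) (hy : y ^ 2 = x ^ 2)
    (hgen : Subgroup.closure {x, y} = ⊤) : Function.Surjective (quaternionNormalForm x y) := by
  intro g
  obtain ⟨n, m, rfl⟩ := exists_pow_mul_pow_of_mem_closure hyx hy (hgen ▸ Subgroup.mem_top g)
  refine ⟨(⟨(n + 2 * (m / 2)) % 4, Nat.mod_lt _ four_pos⟩, ⟨m % 2, Nat.mod_lt _ two_pos⟩), ?_⟩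
  rw [quaternionNormalForm, ← pow_eq_pow_mod _ (pow_four_eq_one_of_conj_eq_inv hyx hy), pow_add,
    pow_mul, ← hy, ← pow_mul, mul_assoc, ← pow_add, Nat.div_add_mod]

end QuaternionNormalForm

open QuaternionGroup in
theorem quaternionNormalForm_bijective :
    Function.Bijective (quaternionNormalForm (a 1 : QuaternionGroup 2) (xa 0)) := by
  decide

namespace QuaternionSpace

open PresentedGroup QuaternionGroup

def x : PresentedGroup quaternionSpaceRels := .of 0
def y : PresentedGroup quaternionSpaceRels := .of 1
def z : PresentedGroup quaternionSpaceRels := .of 2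
def h : PresentedGroup quaternionSpaceRels := .of 3

theorem x_sq_mul_h : x ^ 2 * h = 1 :=
  one_of_mem (x := FreeGroup.of 0 ^ 2 * FreeGroup.of 3) (by simp [quaternionSpaceRels])

theorem y_sq_mul_h : y ^ 2 * h = 1 :=
  one_of_mem (x := FreeGroup.of 1 ^ 2 * FreeGroup.of 3) (by simp [quaternionSpaceRels])

theorem z_inv_sq_mul_h : z⁻¹ ^ 2 * h = 1 :=
  one_of_mem (x := (FreeGroup.of 2)⁻¹ ^ 2 * FreeGroup.of 3) (by simp [quaternionSpaceRels])

theorem x_mul_y_mul_z : x * y * z = 1 :=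
  one_of_mem (x := FreeGroup.of 0 * FreeGroup.of 1 * FreeGroup.of 2) (by simp [quaternionSpaceRels])

theorem z_eq : z = (x * y)⁻¹ := eq_inv_of_mul_eq_one_right x_mul_y_mul_z

theorem h_eq : h = (x ^ 2)⁻¹ := eq_inv_of_mul_eq_one_right x_sq_mul_h

theorem y_sq_eq_x_sq : y ^ 2 = x ^ 2 :=
  mul_right_cancel (y_sq_mul_h.trans x_sq_mul_h.symm)

theorem y_mul_x_mul_y_inv : y * x * y⁻¹ = x⁻¹ := by
  have hxy : (x * y) ^ 2 = y ^ 2 := by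
    refine mul_right_cancel (Eq.trans ?_ y_sq_mul_h.symm)
    rw [← z_inv_sq_mul_h, z_eq, inv_inv]
  calc y * x * y⁻¹ = x⁻¹ * ((x * y) ^ 2 * (y ^ 2)⁻¹) := by simp only [sq]; group
    _ = x⁻¹ := by rw [hxy, mul_inv_cancel, mul_one]

theorem closure_x_y : Subgroup.closure {x, y} = ⊤ := by
  have hx : x ∈ Subgroup.closure {x, y} := Subgroup.subset_closure (by simp)
  have hy : y ∈ Subgroup.closure {x, y} := Subgroup.subset_closure (by simp)
  refine eq_top_iff.mpr fun g _ ↦ generated_by _ _ (fun i ↦ ?_) g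
  fin_cases i
  · exact hx
  · exact hy
  · exact (z_eq ▸ inv_mem (mul_mem hx hy) : z ∈ _)
  · exact (h_eq ▸ inv_mem (pow_mem hx 2) : h ∈ _)

-- In `QuaternionGroup 2`, `a 1 = i`, `xa 0 = j`, `xa 1 = (ij)⁻¹` and `a 2 = -1`.
theorem toQ8_rels : ∀ r ∈ quaternionSpaceRels,
    FreeGroup.lift ![a 1, xa 0, xa 1, a 2] r = (1 : QuaternionGroup 2) := by
  intro r hr
  rcases hr with rfl | rfl | rfl | rfl | rfl | rfl | rfl <;>
    simp only [map_mul, map_inv, map_pow, FreeGroup.lift_apply_of] <;> decide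

def toQ8 : PresentedGroup quaternionSpaceRels →* QuaternionGroup 2 := toGroup toQ8_rels

theorem toQ8_bijective : Function.Bijective toQ8 := by
  have hQ8 : Function.Bijective (toQ8 ∘ quaternionNormalForm x y) := by
    rw [toQ8.comp_quaternionNormalForm]
    exact quaternionNormalForm_bijective
  have hπ : Function.Bijective (quaternionNormalForm x y) :=
    ⟨hQ8.injective.of_comp,
      quaternionNormalForm_surjective y_mul_x_mul_y_inv y_sq_eq_x_sq closure_x_y⟩
  exact (Function.Bijective.of_comp_iff _ hπ).mp hQ8

end QuaternionSpace

theorem quaternion_space_pi1_iso_Q8 :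
    Nonempty (PresentedGroup quaternionSpaceRels ≃* QuaternionGroup 2) :=
  ⟨MulEquiv.ofBijective _ QuaternionSpace.toQ8_bijective⟩
end

section
/- Let p, q, r be natural numbers with p, q, r ≥ 2. If the triangle group Δ(p,q,r), presented with generators x, y, z and relators x^p, y^q, z^r, x y z, is isomorphic to the Klein four-group ℤ/2 × ℤ/2, then p = q = r = 2. -/
/-!
If `Δ(p,q,r)` is a Klein four-group, all of `p, q, r` are even: were `p` odd, `x² = 1 = xᵖ` would
kill `x`, leaving the group generated by `y` alone, hence cyclic. With `q` and `r` even, sending `x`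
to a rotation of order `p` and `y`, `z` to reflections maps `Δ(p,q,r)` to the dihedral group of
order `2p`, so `x` has order `p`; as `x² = 1`, `p ∣ 2`, whence `p = 2`. The cyclic symmetry
`Δ(p,q,r) ≅ Δ(q,r,p)` gives the same for `q` and `r`.
-/

/-- Relators of the triangle group Δ(p,q,r): generators `x = of 0`, `y = of 1`, `z = of 2`,
relators `x^p, y^q, z^r, xyz`. -/
def triangleRels (p q r : ℕ) : Set (FreeGroup (Fin 3)) :=
  { FreeGroup.of 0 ^ p, FreeGroup.of 1 ^ q, FreeGroup.of 2 ^ r,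
    FreeGroup.of 0 * FreeGroup.of 1 * FreeGroup.of 2 }

theorem IsKleinFour.of_mulEquiv {G H : Type*} [Group G] [Group H] [IsKleinFour H]
    (e : G ≃* H) : IsKleinFour G where
  card_four := (Nat.card_congr e.toEquiv).trans IsKleinFour.card_four
  exponent_two := (Monoid.exponent_eq_of_mulEquiv e).trans IsKleinFour.exponent_two

abbrev TriangleGroup (p q r : ℕ) : Type := PresentedGroup (triangleRels p q r)

namespace TriangleGroup

variable {p q r : ℕ}

abbrev x : TriangleGroup p q r := PresentedGroup.of 0
abbrev y : TriangleGroup p q r := PresentedGroup.of 1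
abbrev z : TriangleGroup p q r := PresentedGroup.of 2

theorem x_pow : (x : TriangleGroup p q r) ^ p = 1 :=
  PresentedGroup.one_of_mem (by simp [triangleRels])

theorem y_pow : (y : TriangleGroup p q r) ^ q = 1 :=
  PresentedGroup.one_of_mem (by simp [triangleRels])

theorem z_pow : (z : TriangleGroup p q r) ^ r = 1 :=
  PresentedGroup.one_of_mem (by simp [triangleRels])

theorem x_mul_y_mul_z : (x * y * z : TriangleGroup p q r) = 1 :=
  PresentedGroup.one_of_mem (by simp [triangleRels])

theorem z_eq_inv : (z : TriangleGroup p q r) = (x * y)⁻¹ :=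
  eq_inv_of_mul_eq_one_right x_mul_y_mul_z

theorem closure_x_y : Subgroup.closure {x, y} = (⊤ : Subgroup (TriangleGroup p q r)) := by
  rw [eq_top_iff, ← PresentedGroup.closure_range_of, Subgroup.closure_le]
  set H := Subgroup.closure {(x : TriangleGroup p q r), y}
  have hx : x ∈ H := Subgroup.subset_closure (by simp)
  have hy : y ∈ H := Subgroup.subset_closure (by simp)
  rintro _ ⟨i, rfl⟩
  fin_cases i
  · exact hx
  · exact hy
  · change z ∈ _
    rw [z_eq_inv]
    exact inv_mem (mul_mem hx hy)

section lift

variable {G : Type*} [Group G]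

def lift (a b c : G) (ha : a ^ p = 1) (hb : b ^ q = 1) (hc : c ^ r = 1) (habc : a * b * c = 1) :
    TriangleGroup p q r →* G :=
  PresentedGroup.toGroup (f := ![a, b, c]) (by
    simp only [triangleRels, Set.mem_insert_iff, Set.mem_singleton_iff]
    rintro _ (rfl | rfl | rfl | rfl) <;> simpa)

variable {a b c : G} (ha : a ^ p = 1) (hb : b ^ q = 1) (hc : c ^ r = 1) (habc : a * b * c = 1)

@[simp] theorem lift_x : lift a b c ha hb hc habc x = a := PresentedGroup.toGroup.of _
@[simp] theorem lift_y : lift a b c ha hb hc habc y = b := PresentedGroup.toGroup.of _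
@[simp] theorem lift_z : lift a b c ha hb hc habc z = c := PresentedGroup.toGroup.of _

end lift

def rotate (p q r : ℕ) : TriangleGroup p q r ≃* TriangleGroup q r p :=
  MonoidHom.toMulEquiv
    (lift z x y z_pow x_pow y_pow (by rw [mul_assoc, z_eq_inv, inv_mul_cancel]))
    (lift y z x y_pow z_pow x_pow (by rw [mul_eq_one_comm, ← mul_assoc, x_mul_y_mul_z]))
    (PresentedGroup.ext fun i => by fin_cases i <;> simp)
    (PresentedGroup.ext fun i => by fin_cases i <;> simp)

theorem isKleinFour_rotate [IsKleinFour (TriangleGroup p q r)] :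
    IsKleinFour (TriangleGroup q r p) :=
  .of_mulEquiv (rotate p q r).symm

theorem orderOf_x_of_even (hq : Even q) (hr : Even r) :
    orderOf (x : TriangleGroup p q r) = p := by
  have hsr {n k : ℕ} (i : ZMod n) (hk : Even k) : DihedralGroup.sr i ^ k = 1 :=
    orderOf_dvd_iff_pow_eq_one.1 (DihedralGroup.orderOf_sr i ▸ hk.two_dvd)
  let φ := lift (DihedralGroup.r 1 : DihedralGroup p) (DihedralGroup.sr 0) (DihedralGroup.sr (-1))
    (by rw [DihedralGroup.r_one_pow, ZMod.natCast_self, DihedralGroup.one_def])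
    (hsr 0 hq) (hsr (-1) hr)
    (by rw [DihedralGroup.r_mul_sr, zero_sub, DihedralGroup.sr_mul_self])
  refine Nat.dvd_antisymm (orderOf_dvd_of_pow_eq_one x_pow) ?_
  simpa [φ, DihedralGroup.orderOf_r_one] using orderOf_map_dvd φ x

theorem even_of_sq_x_eq_one (hx : (x : TriangleGroup p q r) ^ 2 = 1)
    (hcyc : ¬IsCyclic (TriangleGroup p q r)) : Even p := by
  by_contra hp
  have hx1 : (x : TriangleGroup p q r) = 1 :=
    (pow_eq_one_iff_of_coprime (Nat.not_even_iff_odd.1 hp).coprime_two_left).1 ⟨hx, x_pow⟩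
  refine hcyc (isCyclic_iff_exists_zpowers_eq_top.2 ⟨y, eq_top_iff.2 ?_⟩)
  rw [← closure_x_y, Subgroup.closure_le, Set.insert_subset_iff, hx1]
  exact ⟨one_mem _, by simp⟩

theorem eq_two_of_isKleinFour [IsKleinFour (TriangleGroup p q r)] : p = 2 := by
  have : IsKleinFour (TriangleGroup q r p) := isKleinFour_rotate
  have : IsKleinFour (TriangleGroup r p q) := isKleinFour_rotate
  have hsq {a b c : ℕ} [IsKleinFour (TriangleGroup a b c)] : (x : TriangleGroup a b c) ^ 2 = 1 :=
    (sq x).trans (IsKleinFour.mul_self x)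
  have hp : Even p := even_of_sq_x_eq_one (q := q) (r := r) hsq IsKleinFour.not_isCyclic
  have hq : Even q := even_of_sq_x_eq_one (q := r) (r := p) hsq IsKleinFour.not_isCyclic
  have hr : Even r := even_of_sq_x_eq_one (q := p) (r := q) hsq IsKleinFour.not_isCyclic
  have hdvd : p ∣ 2 := orderOf_x_of_even (p := p) hq hr ▸ orderOf_dvd_of_pow_eq_one hsq
  rcases (Nat.dvd_prime Nat.prime_two).1 hdvd with rfl | rfl
  · exact absurd hp Nat.not_even_one
  · rfl

end TriangleGroup

theorem triangle_group_iso_klein_four_imp_222_general (p q r : ℕ)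
    (h : Nonempty (PresentedGroup (triangleRels p q r) ≃*
      Multiplicative (ZMod 2 × ZMod 2))) :
    p = 2 ∧ q = 2 ∧ r = 2 := by
  obtain ⟨e⟩ := h
  have : IsKleinFour (TriangleGroup p q r) := .of_mulEquiv e
  have : IsKleinFour (TriangleGroup q r p) := TriangleGroup.isKleinFour_rotate
  have : IsKleinFour (TriangleGroup r p q) := TriangleGroup.isKleinFour_rotate
  exact ⟨TriangleGroup.eq_two_of_isKleinFour (q := q) (r := r),
    TriangleGroup.eq_two_of_isKleinFour (q := r) (r := p),
    TriangleGroup.eq_two_of_isKleinFour (q := p) (r := q)⟩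

theorem triangle_group_iso_klein_four_imp_222 (p q r : ℕ)
    (hp : 2 ≤ p) (hq : 2 ≤ q) (hr : 2 ≤ r)
    (h : Nonempty (PresentedGroup (triangleRels p q r) ≃*
      Multiplicative (ZMod 2 × ZMod 2))) :
    p = 2 ∧ q = 2 ∧ r = 2 :=
  triangle_group_iso_klein_four_imp_222_general p q r h
end

section
/- Let a, b, c be integers with ab + bc + ca ≠ 0. Let N be the ℤ-submodule of ℤ⁴ = (Fin 4 → ℤ) spanned by the four vectors (a,0,0,1), (0,b,0,1), (0,0,c,1), and (1,1,1,0). Then the quotient group ℤ⁴/N is finite and its cardinality equals |ab + bc + ca|. -/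
/-! The four relation vectors are the rows of an integer matrix `A` with
`det A = -(ab + bc + ca)`. A nonsingular integer matrix has linearly independent rows, which
therefore form a basis of the lattice they span, and the index of that lattice in `ℤⁿ` is the
absolute value of the determinant of this basis, i.e. `|det A|` (Smith normal form). -/

section

variable {ι : Type*} [Fintype ι] [DecidableEq ι]

theorem natCard_quotient_span_eq_natAbs_det (v : ι → ι → ℤ) (hv : (Matrix.of v).det ≠ 0) :
    Nat.card ((ι → ℤ) ⧸ Submodule.span ℤ (Set.range v)) = (Matrix.of v).det.natAbs := by
  have hli : LinearIndependent ℤ v := Matrix.linearIndependent_rows_of_det_ne_zero hv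
  have hrows : ((↑) ∘ Module.Basis.span hli : ι → ι → ℤ) = v :=
    funext (Module.Basis.coe_span_apply hli)
  rw [← Submodule.natAbs_det_basis_change (Pi.basisFun ℤ ι) _ (Module.Basis.span hli), hrows,
    Pi.basisFun_det]
  rfl

theorem finite_quotient_span_of_det_ne_zero (v : ι → ι → ℤ) (hv : (Matrix.of v).det ≠ 0) :
    Finite ((ι → ℤ) ⧸ Submodule.span ℤ (Set.range v)) :=
  (Nat.card_ne_zero.mp (by simpa [natCard_quotient_span_eq_natAbs_det v hv] using hv)).2

end

def seifertRelations (a b c : ℤ) : Fin 4 → Fin 4 → ℤ :=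
  ![![a, 0, 0, 1], ![0, b, 0, 1], ![0, 0, c, 1], ![1, 1, 1, 0]]

theorem range_seifertRelations (a b c : ℤ) :
    Set.range (seifertRelations a b c) =
      {![a, 0, 0, 1], ![0, b, 0, 1], ![0, 0, c, 1], ![1, 1, 1, 0]} := by
  simp only [seifertRelations, Matrix.range_cons, Matrix.range_empty, Set.union_empty,
    Set.singleton_union]

theorem det_seifertRelations (a b c : ℤ) :
    (Matrix.of (seifertRelations a b c)).det = -(a * b + b * c + c * a) := by
  simp [seifertRelations, Matrix.det_succ_row_zero, Fin.sum_univ_succ, Fin.succAbove]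
  ring

theorem card_quotient_seifert_relations (a b c : ℤ) (h : a * b + b * c + c * a ≠ 0) :
    Finite ((Fin 4 → ℤ) ⧸
      Submodule.span ℤ ({![a, 0, 0, 1], ![0, b, 0, 1], ![0, 0, c, 1], ![1, 1, 1, 0]} :
        Set (Fin 4 → ℤ))) ∧
    Nat.card ((Fin 4 → ℤ) ⧸
      Submodule.span ℤ ({![a, 0, 0, 1], ![0, b, 0, 1], ![0, 0, c, 1], ![1, 1, 1, 0]} :
        Set (Fin 4 → ℤ))) = (a * b + b * c + c * a).natAbs := by
  have hdet : (Matrix.of (seifertRelations a b c)).det ≠ 0 := by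
    rwa [det_seifertRelations, neg_ne_zero]
  rw [← range_seifertRelations]
  refine ⟨finite_quotient_span_of_det_ne_zero _ hdet, ?_⟩
  rw [natCard_quotient_span_eq_natAbs_det _ hdet, det_seifertRelations, Int.natAbs_neg]
end

section
/- Let a, b, c be integers and let N be the ℤ-submodule of ℤ² spanned by the vectors (a,0), (0,b), and (c,c). If the quotient group ℤ²/N is isomorphic, as an additive group, to ℤ/2 × ℤ/2, then a and b are both even. -/
theorem even_of_quotient_iso_klein_four (a b c : ℤ)
    (h : Nonempty (((Fin 2 → ℤ) ⧸
      Submodule.span ℤ ({![a, 0], ![0, b], ![c, c]} : Set (Fin 2 → ℤ))) ≃+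
        (ZMod 2 × ZMod 2))) :
    Even a ∧ Even b := by
  obtain ⟨e⟩ := h
  set N := Submodule.span ℤ ({![a, 0], ![0, b], ![c, c]} : Set (Fin 2 → ℤ)) with hN
  set Q := (Fin 2 → ℤ) ⧸ N with hQ
  have hK : ∀ x : ZMod 2 × ZMod 2, 2 • x = 0 := by decide
  have h2 : ∀ q : Q, 2 • q = 0 := by
    intro q
    apply e.injective
    rw [map_nsmul, map_zero, hK]
  let mk : (Fin 2 → ℤ) →ₗ[ℤ] Q := N.mkQ
  -- g1, g2
  let g1 : ℤ →+ Q := (LinearMap.toSpanSingleton ℤ Q (mk ![1, 0])).toAddMonoidHom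
  let g2 : ℤ →+ Q := (LinearMap.toSpanSingleton ℤ Q (mk ![0, 1])).toAddMonoidHom
  have hg1 : g1 2 = 0 := by
    have := h2 (mk ![1, 0])
    show (2:ℤ) • mk ![1, 0] = 0
    rw [two_zsmul]; rw [two_nsmul] at this; exact this
  have hg2 : g2 2 = 0 := by
    have := h2 (mk ![0, 1])
    show (2:ℤ) • mk ![0, 1] = 0
    rw [two_zsmul]; rw [two_nsmul] at this; exact this
  let f : ZMod 2 × ZMod 2 →+ Q :=
    (ZMod.lift 2 ⟨g1, hg1⟩).comp (AddMonoidHom.fst _ _) +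
      (ZMod.lift 2 ⟨g2, hg2⟩).comp (AddMonoidHom.snd _ _)
  have hf : ∀ m n : ℤ, f ((m : ZMod 2), (n : ZMod 2)) = mk ![m, n] := by
    intro m n
    have hv : (![m, n] : Fin 2 → ℤ) = m • ![1, 0] + n • ![0, 1] := by
      funext i
      fin_cases i <;> simp
    show (ZMod.lift 2 ⟨g1, hg1⟩) (m : ZMod 2) + (ZMod.lift 2 ⟨g2, hg2⟩) (n : ZMod 2) = mk ![m, n]
    rw [ZMod.lift_coe, ZMod.lift_coe]
    show m • mk ![1, 0] + n • mk ![0, 1] = mk ![m, n]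
    rw [hv, map_add, map_smul, map_smul]
  have hsurj : Function.Surjective f := by
    intro q
    obtain ⟨v, rfl⟩ := N.mkQ_surjective q
    refine ⟨((v 0 : ZMod 2), (v 1 : ZMod 2)), ?_⟩
    have : (![v 0, v 1] : Fin 2 → ℤ) = v := by
      funext i; fin_cases i <;> rfl
    rw [hf, this]
  haveI : Fintype Q := Fintype.ofEquiv _ e.toEquiv.symm
  have hcard : Fintype.card (ZMod 2 × ZMod 2) = Fintype.card Q :=
    (Fintype.card_congr e.toEquiv).symm
  have hinj : Function.Injective f :=
    ((Fintype.bijective_iff_surjective_and_card f).mpr ⟨hsurj, hcard⟩).1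
  have key : ∀ v ∈ N, mk v = 0 := fun v hv => (Submodule.Quotient.mk_eq_zero N).mpr hv
  have ha : ((a : ZMod 2), (0 : ZMod 2)) = 0 := by
    apply hinj
    rw [map_zero]
    have : ((0 : ZMod 2)) = ((0 : ℤ) : ZMod 2) := by norm_num
    rw [this, hf]
    exact key _ (Submodule.subset_span (by simp))
  have hb : ((0 : ZMod 2), (b : ZMod 2)) = 0 := by
    apply hinj
    rw [map_zero]
    have : ((0 : ZMod 2)) = ((0 : ℤ) : ZMod 2) := by norm_num
    rw [this, hf]
    exact key _ (Submodule.subset_span (by simp))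
  constructor
  · have := congrArg Prod.fst ha
    simp only [Prod.fst_zero] at this
    rw [even_iff_two_dvd]
    exact (ZMod.intCast_zmod_eq_zero_iff_dvd a 2).mp this
  · have := congrArg Prod.snd hb
    simp only [Prod.snd_zero] at this
    rw [even_iff_two_dvd]
    exact (ZMod.intCast_zmod_eq_zero_iff_dvd b 2).mp this
end
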